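/- arXiv:0712.2798 — 5 statements merged into one kernel-verified Lean document; each statement's English description precedes it below -/
import Mathlib

section
/- Let T be a regular simplicial triangulation of a polygonal/polyhedral domain Ω ⊂ R^d with regularity parameter θ ≥ θ_0 > 0, and let v be a function in the Crouzeix–Raviart space V_h (piecewise affine on each simplex, with continuous mean value across each internal face and zero mean on boundary faces). Then Σ_{σ∈E} (1/h_σ)·∫_σ [v]^2 dγ ≤ c(θ_0)·Σ_{K∈T} ∫_K |∇v|^2 dx, where [v] denotes the jump of v across an internal face σ and [v] = v on boundary faces, and c(θ_0) depends only on θ_0. -/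
open MeasureTheory Set

noncomputable section

/-- Euclidean space `ℝ^d`. -/
abbrev Euc (d : ℕ) := EuclideanSpace ℝ (Fin d)

/-- The (closed) simplex with vertices `p 0, …, p d`. -/
def cellSet {d : ℕ} (p : Fin (d + 1) → Euc d) : Set (Euc d) :=
  convexHull ℝ (Set.range p)

/-- The face of the simplex with vertices `p` opposite to the vertex `p i`. -/
def faceSet {d : ℕ} (p : Fin (d + 1) → Euc d) (i : Fin (d + 1)) : Set (Euc d) :=
  convexHull ℝ (p '' ({i}ᶜ : Set (Fin (d + 1))))

/-- The affine function `x ↦ ⟪g, x⟫ + b` on `ℝ^d`. -/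
def affFn {d : ℕ} (g : Euc d) (b : ℝ) : Euc d → ℝ := fun x => (inner ℝ g x : ℝ) + b

/-- A conforming simplicial mesh of a polygonal/polyhedral domain `Ω ⊂ ℝ^d`:
a finite family of nondegenerate simplices with pairwise disjoint interiors covering
`closure Ω`, such that two distinct cells meet in the empty set, a common vertex, or a
common face. -/
structure Mesh (d : ℕ) (Ω : Set (Euc d)) where
  cells : Finset (Fin (d + 1) → Euc d)
  indep : ∀ p ∈ cells, AffineIndependent ℝ p
  cover : closure Ω = ⋃ p ∈ cells, cellSet p
  disjoint_interiors : ∀ p ∈ cells, ∀ q ∈ cells, p ≠ q →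
    interior (cellSet p) ∩ interior (cellSet q) = ∅
  conforming : ∀ p ∈ cells, ∀ q ∈ cells, p ≠ q →
    cellSet p ∩ cellSet q = ∅ ∨ (∃ x, cellSet p ∩ cellSet q = {x}) ∨
      ∃ i j, faceSet p i = faceSet q j ∧ cellSet p ∩ cellSet q = faceSet p i

/-- The set of all faces (edges if `d = 2`) of the mesh. -/
def Mesh.faces {d : ℕ} {Ω : Set (Euc d)} (M : Mesh d Ω) : Finset (Set (Euc d)) :=
  letI : DecidableEq (Set (Euc d)) := Classical.decEq _
  (M.cells ×ˢ (Finset.univ : Finset (Fin (d + 1)))).image fun pi => faceSet pi.1 pi.2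

/-- A face is internal when it is a common face of two distinct cells. -/
def Mesh.InternalFace {d : ℕ} {Ω : Set (Euc d)} (M : Mesh d Ω) (σ : Set (Euc d)) : Prop :=
  ∃ p ∈ M.cells, ∃ q ∈ M.cells, p ≠ q ∧
    (∃ i, σ = faceSet p i) ∧ ∃ j, σ = faceSet q j

/-- Mesh regularity `θ ≥ θ₀`: every cell contains a ball of diameter `θ₀ · h_K`, and the
diameters of two cells sharing a face are comparable with ratio at least `θ₀`. -/
def Mesh.Regular {d : ℕ} {Ω : Set (Euc d)} (M : Mesh d Ω) (θ0 : ℝ) : Prop :=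
  (∀ p ∈ M.cells, ∃ x : Euc d,
      Metric.ball x (θ0 * Metric.diam (cellSet p) / 2) ⊆ cellSet p) ∧
  ∀ p ∈ M.cells, ∀ q ∈ M.cells, (∃ i j, faceSet p i = faceSet q j) →
    θ0 * Metric.diam (cellSet p) ≤ Metric.diam (cellSet q)

/-- Mean-value continuity across internal faces of the piecewise affine function with
pieces `affFn (g p) (b p)` (Crouzeix–Raviart condition). -/
def Mesh.CRContinuous {d : ℕ} {Ω : Set (Euc d)} (M : Mesh d Ω)
    (g : (Fin (d + 1) → Euc d) → Euc d) (b : (Fin (d + 1) → Euc d) → ℝ) : Prop :=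
  ∀ p ∈ M.cells, ∀ q ∈ M.cells, ∀ i j, faceSet p i = faceSet q j →
    ∫ x in faceSet p i, affFn (g p) (b p) x ∂μH[(d : ℝ) - 1] =
      ∫ x in faceSet p i, affFn (g q) (b q) x ∂μH[(d : ℝ) - 1]

/-- Zero mean value on boundary (non-internal) faces (Crouzeix–Raviart boundary
condition). -/
def Mesh.CRBoundary {d : ℕ} {Ω : Set (Euc d)} (M : Mesh d Ω)
    (g : (Fin (d + 1) → Euc d) → Euc d) (b : (Fin (d + 1) → Euc d) → ℝ) : Prop :=
  ∀ p ∈ M.cells, ∀ i, ¬ M.InternalFace (faceSet p i) →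
    ∫ x in faceSet p i, affFn (g p) (b p) x ∂μH[(d : ℝ) - 1] = 0

/-- Square of the broken `H¹` seminorm of the piecewise affine function with cellwise
gradients `g p`. -/
def Mesh.brokenSq {d : ℕ} {Ω : Set (Euc d)} (M : Mesh d Ω)
    (g : (Fin (d + 1) → Euc d) → Euc d) : ℝ :=
  ∑ p ∈ M.cells, (volume (cellSet p)).toReal * ‖g p‖ ^ 2

end

/-!
On a face `σ`, both the jump of a Crouzeix–Raviart function across an internal face and its
trace on a boundary face are affine functions with zero mean on `σ`. A zero-mean function is
bounded in `L²(σ)` by its oscillation, so `∫_σ [v]² ≤ μH[d-1](σ) (|∇[v]| h_σ)²`, and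
`σ` is a Lipschitz image of the unit cube of `ℝ^(d-1)`, which gives
`μH[d-1](σ) ≤ ((d-1) h_σ)^(d-1)`. Hence `h_σ⁻¹ ∫_σ [v]² ≲ h_σ^d |∇[v]|²`, and the ball of
radius `θ₀ h_K / 2` inscribed in a cell `K ∋ σ` absorbs `h_σ^d ≤ h_K^d` into a
`θ₀`-dependent multiple of `|K|`. Every cell has `d + 1` faces, so summing over the faces
costs only a factor `2 (d + 1)`.
-/

open Metric
open scoped ENNReal

theorem hausdorffMeasure_convexHull_range_le {E : Type*} [NormedAddCommGroup E] [NormedSpace ℝ E]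
    [MeasurableSpace E] [BorelSpace E] {n : ℕ} (y : Fin (n + 1) → E) :
    μH[n] (convexHull ℝ (range y)) ≤ ENNReal.ofReal ((n * diam (convexHull ℝ (range y))) ^ n) := by
  set L := diam (convexHull ℝ (range y))
  set Δ : Fin n → E := fun k => y k.succ - y 0
  set f : (Fin n → ℝ) → E := fun t => y 0 + Fintype.linearCombination ℝ Δ t
  have hΔ : ∀ k, ‖Δ k‖ ≤ L := fun k => by
    rw [← dist_eq_norm]
    exact dist_le_diam_of_mem (isBounded_convexHull.2 (finite_range y).isBounded)
      (subset_convexHull ℝ _ ⟨_, rfl⟩) (subset_convexHull ℝ _ ⟨_, rfl⟩)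
  have hlip : LipschitzWith (n * L).toNNReal f := by
    refine LipschitzWith.of_dist_le_mul fun t s => ?_
    rw [Real.coe_toNNReal _ (by positivity), dist_eq_norm, dist_eq_norm,
      add_sub_add_left_eq_sub, ← map_sub, Fintype.linearCombination_apply]
    calc ‖∑ k, (t - s) k • Δ k‖ ≤ ∑ k, ‖(t - s) k • Δ k‖ := norm_sum_le _ _
      _ ≤ ∑ _k : Fin n, ‖t - s‖ * L := Finset.sum_le_sum fun k _ => by
          rw [norm_smul]
          exact mul_le_mul (norm_le_pi_norm (t - s) k) (hΔ k) (norm_nonneg _) (norm_nonneg _)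
      _ = n * L * ‖t - s‖ := by simp; ring
  have hcover : convexHull ℝ (range y) ⊆ f '' Icc 0 1 := by
    have hconv := ((convex_Icc (0 : Fin n → ℝ) 1).linear_image
      (Fintype.linearCombination ℝ Δ)).translate (y 0)
    rw [image_image] at hconv
    refine convexHull_min (range_subset_iff.2 fun i => ?_) hconv
    induction i using Fin.cases with
    | zero => exact ⟨0, ⟨le_rfl, zero_le_one⟩, by simp [f]⟩
    | succ k =>
      refine ⟨Pi.single k 1, ⟨?_, ?_⟩, ?_⟩
      · exact Pi.single_nonneg.2 zero_le_one
      · intro j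
        rcases eq_or_ne j k with rfl | h <;> simp [*]
      · simp [f, Fintype.linearCombination_apply_single, Δ]
  have hcube : μH[n] (Icc (0 : Fin n → ℝ) 1) = 1 := by
    have := congrArg (· (Icc (0 : Fin n → ℝ) 1)) (hausdorffMeasure_pi_real (ι := Fin n))
    simp_all [Real.volume_Icc_pi]
  calc μH[n] (convexHull ℝ (range y)) ≤ μH[n] (f '' Icc 0 1) := measure_mono hcover
    _ ≤ ((n * L).toNNReal : ℝ≥0∞) ^ (n : ℝ) * μH[n] (Icc (0 : Fin n → ℝ) 1) :=
      hlip.hausdorffMeasure_image_le (Nat.cast_nonneg n) _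
    _ = ENNReal.ofReal ((n * L) ^ n) := by
      rw [hcube, mul_one, ENNReal.rpow_natCast, ENNReal.ofReal_pow (by positivity)]
      rfl

theorem setIntegral_sq_le_of_setIntegral_eq_zero {α : Type*} [MeasurableSpace α] {μ : Measure α}
    {s : Set α} {f : α → ℝ} {δ : ℝ} (hs : MeasurableSet s) (hμs : μ s ≠ ∞)
    (hf : IntegrableOn f s μ) (h0 : ∫ x in s, f x ∂μ = 0)
    (hosc : ∀ x ∈ s, ∀ y ∈ s, |f x - f y| ≤ δ) :
    ∫ x in s, f x ^ 2 ∂μ ≤ μ.real s * δ ^ 2 := by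
  rcases s.eq_empty_or_nonempty with rfl | ⟨x₀, hx₀⟩
  · simp
  set c := f x₀
  have hf2 : IntegrableOn (fun x => f x ^ 2) s μ := by
    refine .of_bound hμs.lt_top (hf.aestronglyMeasurable.pow 2) ((|c| + δ) ^ 2)
      ((ae_restrict_iff' hs).2 (ae_of_all _ fun x hx => ?_))
    rw [Real.norm_eq_abs, abs_pow]
    have : |f x| ≤ |c| + δ := by
      have := hosc x hx x₀ hx₀
      have := abs_sub_abs_le_abs_sub (f x) c
      linarith
    exact pow_le_pow_left₀ (abs_nonneg _) this 2
  -- The mean of `f` vanishes, so subtracting a constant can only increase the `L²` norm.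
  have hshift : ∫ x in s, (f x - c) ^ 2 ∂μ = ∫ x in s, f x ^ 2 ∂μ + μ.real s * c ^ 2 := by
    have hexp : ∀ x, (f x - c) ^ 2 = f x ^ 2 - 2 * c * f x + c ^ 2 := fun x => by ring
    have hlin : IntegrableOn (fun x => f x ^ 2 - 2 * c * f x) s μ := hf2.sub (hf.const_mul _)
    simp only [hexp]
    rw [integral_add hlin (integrableOn_const (C := c ^ 2) hμs),
      integral_sub hf2 (hf.const_mul _), integral_const_mul, h0, setIntegral_const, smul_eq_mul]
    ring
  have hbound : ∫ x in s, (f x - c) ^ 2 ∂μ ≤ δ ^ 2 * μ.real s := by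
    refine (Real.le_norm_self _).trans
      (norm_setIntegral_le_of_norm_le_const hμs.lt_top fun x hx => ?_)
    rw [Real.norm_eq_abs, abs_pow]
    exact pow_le_pow_left₀ (abs_nonneg _) (hosc x hx x₀ hx₀) 2
  nlinarith [measureReal_nonneg (μ := μ) (s := s), sq_nonneg c]

theorem measureReal_ball_pos {X : Type*} [PseudoMetricSpace X] [ProperSpace X]
    [MeasurableSpace X] (μ : Measure X) [μ.IsOpenPosMeasure] [IsFiniteMeasureOnCompacts μ]
    (x : X) {r : ℝ} (hr : 0 < r) : 0 < μ.real (ball x r) :=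
  ENNReal.toReal_pos (measure_ball_pos μ x hr).ne' measure_ball_lt_top.ne

theorem pow_finrank_mul_measureReal_ball_le {E : Type*} [NormedAddCommGroup E] [NormedSpace ℝ E]
    [Nontrivial E] [MeasurableSpace E] [BorelSpace E] [FiniteDimensional ℝ E] (μ : Measure E)
    [μ.IsAddHaarMeasure] {s : Set E} (hs : μ s ≠ ∞) {x : E} {r : ℝ} (hr : 0 ≤ r)
    (h : ball x r ⊆ s) :
    r ^ Module.finrank ℝ E * μ.real (ball 0 1) ≤ μ.real s := by
  have := measureReal_mono h hs
  rwa [measureReal_def, Measure.addHaar_ball μ x hr, ENNReal.toReal_mul,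
    ENNReal.toReal_ofReal (by positivity)] at this

theorem continuous_affFn {d : ℕ} (G : Euc d) (B : ℝ) : Continuous (affFn G B) :=
  (continuous_const.inner continuous_id).add continuous_const

theorem affFn_sub_affFn {d : ℕ} (G G' : Euc d) (B B' : ℝ) (x : Euc d) :
    affFn G B x - affFn G' B' x = affFn (G - G') (B - B') x := by
  simp only [affFn, inner_sub_left]
  ring

theorem abs_affFn_sub_affFn_le {d : ℕ} (G : Euc d) (B : ℝ) (x y : Euc d) :
    |affFn G B x - affFn G B y| ≤ ‖G‖ * dist x y := by
  rw [dist_eq_norm, affFn, affFn, add_sub_add_right_eq_sub, ← inner_sub_right]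
  exact abs_real_inner_le_norm G _

theorem integrableOn_affFn {d : ℕ} {μ : Measure (Euc d)} {s : Set (Euc d)} (hs : IsCompact s)
    (hμs : μ s ≠ ∞) (G : Euc d) (B : ℝ) : IntegrableOn (affFn G B) s μ := by
  obtain ⟨C, hC⟩ := hs.exists_bound_of_continuousOn (continuous_affFn G B).continuousOn
  exact .of_bound hμs.lt_top (continuous_affFn G B).aestronglyMeasurable C
    ((ae_restrict_iff' hs.measurableSet).2 (ae_of_all _ hC))

theorem faceSet_eq_convexHull_range {d : ℕ} (p : Fin (d + 1) → Euc d) (i : Fin (d + 1)) :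
    faceSet p i = convexHull ℝ (range (p ∘ i.succAbove)) := by
  rw [faceSet, range_comp, Fin.range_succAbove]

theorem isCompact_faceSet {d : ℕ} (p : Fin (d + 1) → Euc d) (i : Fin (d + 1)) :
    IsCompact (faceSet p i) :=
  ((toFinite _).image p).isCompact_convexHull (𝕜 := ℝ)

theorem isCompact_cellSet {d : ℕ} (p : Fin (d + 1) → Euc d) : IsCompact (cellSet p) :=
  (finite_range p).isCompact_convexHull (𝕜 := ℝ)

theorem diam_faceSet_le {d : ℕ} (p : Fin (d + 1) → Euc d) (i : Fin (d + 1)) :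
    diam (faceSet p i) ≤ diam (cellSet p) :=
  diam_mono (convexHull_mono (image_subset_range p _)) (isCompact_cellSet p).isBounded

theorem hausdorffMeasure_faceSet_le {n : ℕ} (p : Fin (n + 1 + 1) → Euc (n + 1))
    (i : Fin (n + 1 + 1)) :
    μH[((n + 1 : ℕ) : ℝ) - 1] (faceSet p i) ≤ ENNReal.ofReal ((n * diam (faceSet p i)) ^ n) := by
  rw [Nat.cast_add_one, add_sub_cancel_right, faceSet_eq_convexHull_range]
  exact hausdorffMeasure_convexHull_range_le _

theorem inv_diam_mul_setIntegral_sq_faceSet_le {n : ℕ} (p : Fin (n + 1 + 1) → Euc (n + 1))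
    (i : Fin (n + 1 + 1)) {G : Euc (n + 1)} {B : ℝ}
    (h0 : ∫ x in faceSet p i, affFn G B x ∂μH[((n + 1 : ℕ) : ℝ) - 1] = 0) :
    1 / diam (faceSet p i) * ∫ x in faceSet p i, affFn G B x ^ 2 ∂μH[((n + 1 : ℕ) : ℝ) - 1] ≤
      n ^ n * diam (faceSet p i) ^ (n + 1) * ‖G‖ ^ 2 := by
  set σ := faceSet p i
  set μ : Measure (Euc (n + 1)) := μH[((n + 1 : ℕ) : ℝ) - 1]
  set h := diam σ
  have hσ : IsCompact σ := isCompact_faceSet p i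
  have hμσ : μ σ ≤ ENNReal.ofReal ((n * h) ^ n) := hausdorffMeasure_faceSet_le p i
  have hμσ_fin : μ σ ≠ ∞ := ne_top_of_le_ne_top ENNReal.ofReal_ne_top hμσ
  have hsq : ∫ x in σ, affFn G B x ^ 2 ∂μ ≤ μ.real σ * (‖G‖ * h) ^ 2 :=
    setIntegral_sq_le_of_setIntegral_eq_zero hσ.measurableSet hμσ_fin
      (integrableOn_affFn hσ hμσ_fin G B) h0 fun x hx y hy =>
        (abs_affFn_sub_affFn_le G B x y).trans <|
          mul_le_mul_of_nonneg_left (dist_le_diam_of_mem hσ.isBounded hx hy) (norm_nonneg G)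
  calc 1 / h * ∫ x in σ, affFn G B x ^ 2 ∂μ ≤ 1 / h * (μ.real σ * (‖G‖ * h) ^ 2) := by
        gcongr
    _ = μ.real σ * ‖G‖ ^ 2 * h := by
        rcases eq_or_ne h 0 with hh | hh
        · simp [hh]
        · field_simp
    _ ≤ (n * h) ^ n * ‖G‖ ^ 2 * h := by
        gcongr
        exact ENNReal.toReal_le_of_le_ofReal (by positivity) hμσ
    _ = n ^ n * h ^ (n + 1) * ‖G‖ ^ 2 := by ring

theorem diam_cellSet_pow_le_of_ball_subset {n : ℕ} {p : Fin (n + 1 + 1) → Euc (n + 1)} {θ0 : ℝ}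
    (hθ0 : 0 < θ0) {x : Euc (n + 1)} (h : ball x (θ0 * diam (cellSet p) / 2) ⊆ cellSet p) :
    diam (cellSet p) ^ (n + 1) ≤
      (2 / θ0) ^ (n + 1) / volume.real (ball (0 : Euc (n + 1)) 1) * volume.real (cellSet p) := by
  have hball := pow_finrank_mul_measureReal_ball_le volume
    (isCompact_cellSet p).measure_lt_top.ne (by positivity) h
  rw [finrank_euclideanSpace_fin] at hball
  have hω : 0 < volume.real (ball (0 : Euc (n + 1)) 1) := measureReal_ball_pos volume 0 one_pos
  rw [div_mul_eq_mul_div, le_div_iff₀ hω]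
  calc diam (cellSet p) ^ (n + 1) * volume.real (ball (0 : Euc (n + 1)) 1)
      = (2 / θ0) ^ (n + 1) *
          ((θ0 * diam (cellSet p) / 2) ^ (n + 1) * volume.real (ball (0 : Euc (n + 1)) 1)) := by
        rw [← mul_assoc, ← mul_pow]
        field_simp
    _ ≤ (2 / θ0) ^ (n + 1) * volume.real (cellSet p) := by gcongr

theorem Mesh.mem_faces {d : ℕ} {Ω : Set (Euc d)} (M : Mesh d Ω) {σ : Set (Euc d)} :
    σ ∈ M.faces ↔ ∃ p ∈ M.cells, ∃ i, faceSet p i = σ := by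
  simp [Mesh.faces]

theorem Mesh.sum_faces_le_card_mul_sum_cells {d : ℕ} {Ω : Set (Euc d)} (M : Mesh d Ω)
    {a : (Fin (d + 1) → Euc d) → ℝ} (ha : ∀ p ∈ M.cells, 0 ≤ a p)
    {P : Set (Euc d) → Fin (d + 1) → Euc d} {I : Set (Euc d) → Fin (d + 1)}
    (hPI : ∀ σ ∈ M.faces, P σ ∈ M.cells ∧ σ = faceSet (P σ) (I σ)) :
    ∑ σ ∈ M.faces, a (P σ) ≤ (d + 1) * ∑ p ∈ M.cells, a p := by
  classical
  have hinj : InjOn (fun σ => (P σ, I σ)) M.faces := fun σ hσ τ hτ hστ => by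
    rw [Prod.mk.injEq] at hστ
    rw [(hPI σ hσ).2, (hPI τ hτ).2, hστ.1, hστ.2]
  calc ∑ σ ∈ M.faces, a (P σ)
      = ∑ x ∈ M.faces.image fun σ => (P σ, I σ), a x.1 :=
        (Finset.sum_image (f := fun x => a x.1) hinj).symm
    _ ≤ ∑ x ∈ M.cells ×ˢ Finset.univ, a x.1 := by
        refine Finset.sum_le_sum_of_subset_of_nonneg ?_ fun x hx _ =>
          ha x.1 (Finset.mem_product.1 hx).1
        intro x hx
        obtain ⟨σ, hσ, rfl⟩ := Finset.mem_image.1 hx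
        exact Finset.mem_product.2 ⟨(hPI σ hσ).1, Finset.mem_univ _⟩
    _ = (d + 1) * ∑ p ∈ M.cells, a p := by
        simp [Finset.sum_product, Finset.mul_sum]

theorem Mesh.sum_faces_le_of_forall_le_add {d : ℕ} {Ω : Set (Euc d)} (M : Mesh d Ω) {F : Set (Euc d) → ℝ}
    {a : (Fin (d + 1) → Euc d) → ℝ} (ha : ∀ p ∈ M.cells, 0 ≤ a p)
    (hF : ∀ σ ∈ M.faces, ∃ p ∈ M.cells, ∃ q ∈ M.cells,
      ∃ i j, σ = faceSet p i ∧ σ = faceSet q j ∧ F σ ≤ a p + a q) :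
    ∑ σ ∈ M.faces, F σ ≤ 2 * (d + 1) * ∑ p ∈ M.cells, a p := by
  choose! P hP Q hQ I J hI hJ hFPQ using hF
  calc ∑ σ ∈ M.faces, F σ ≤ ∑ σ ∈ M.faces, a (P σ) + ∑ σ ∈ M.faces, a (Q σ) := by
        rw [← Finset.sum_add_distrib]
        exact Finset.sum_le_sum hFPQ
    _ ≤ (d + 1) * ∑ p ∈ M.cells, a p + (d + 1) * ∑ p ∈ M.cells, a p := by
        gcongr
        · exact M.sum_faces_le_card_mul_sum_cells ha fun σ hσ => ⟨hP σ hσ, hI σ hσ⟩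
        · exact M.sum_faces_le_card_mul_sum_cells ha fun σ hσ => ⟨hQ σ hσ, hJ σ hσ⟩
    _ = 2 * (d + 1) * ∑ p ∈ M.cells, a p := by ring

/-- With `n = d - 1`, the factors come from `μH[n] σ ≤ (n h_σ) ^ n`, from the inscribed ball
`h_K ^ (n + 1) ≤ (2 / θ0) ^ (n + 1) |K| / |B(0, 1)|`, and from
`‖g₁ - g₂‖ ^ 2 ≤ 2 ‖g₁‖ ^ 2 + 2 ‖g₂‖ ^ 2`. -/
noncomputable def localJumpConst (n : ℕ) (θ0 : ℝ) : ℝ :=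
  2 * n ^ n * (2 / θ0) ^ (n + 1) / volume.real (ball (0 : Euc (n + 1)) 1)

theorem localJumpConst_pos (n : ℕ) {θ0 : ℝ} (hθ0 : 0 < θ0) : 0 < localJumpConst n θ0 := by
  have hω : 0 < volume.real (ball (0 : Euc (n + 1)) 1) := measureReal_ball_pos volume 0 one_pos
  have hn : (0 : ℝ) < n ^ n := by exact_mod_cast Nat.pow_self_pos
  unfold localJumpConst
  positivity

section Mesh

variable {n : ℕ} {Ω : Set (Euc (n + 1))} {M : Mesh (n + 1) Ω} {θ0 : ℝ}

theorem Mesh.Regular.diam_faceSet_pow_le (hreg : M.Regular θ0) (hθ0 : 0 < θ0)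
    {p : Fin (n + 1 + 1) → Euc (n + 1)} (hp : p ∈ M.cells) (i : Fin (n + 1 + 1)) :
    diam (faceSet p i) ^ (n + 1) ≤
      (2 / θ0) ^ (n + 1) / volume.real (ball (0 : Euc (n + 1)) 1) * volume.real (cellSet p) := by
  obtain ⟨x, hx⟩ := hreg.1 p hp
  exact (pow_le_pow_left₀ diam_nonneg (diam_faceSet_le p i) _).trans
    (diam_cellSet_pow_le_of_ball_subset hθ0 hx)

theorem Mesh.Regular.inv_diam_mul_setIntegral_sq_le (hreg : M.Regular θ0) (hθ0 : 0 < θ0)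
    {p q : Fin (n + 1 + 1) → Euc (n + 1)} (hp : p ∈ M.cells) (hq : q ∈ M.cells)
    {i j : Fin (n + 1 + 1)} (hpq : faceSet p i = faceSet q j) {G : Euc (n + 1)} {B : ℝ}
    (h0 : ∫ x in faceSet p i, affFn G B x ∂μH[((n + 1 : ℕ) : ℝ) - 1] = 0)
    {g₁ g₂ : Euc (n + 1)} (hG : ‖G‖ ≤ ‖g₁‖ + ‖g₂‖) :
    1 / diam (faceSet p i) * ∫ x in faceSet p i, affFn G B x ^ 2 ∂μH[((n + 1 : ℕ) : ℝ) - 1] ≤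
      localJumpConst n θ0 *
        (volume.real (cellSet p) * ‖g₁‖ ^ 2 + volume.real (cellSet q) * ‖g₂‖ ^ 2) := by
  have hDp := hreg.diam_faceSet_pow_le hθ0 hp i
  have hDq := hreg.diam_faceSet_pow_le hθ0 hq j
  rw [← hpq] at hDq
  have hG2 : ‖G‖ ^ 2 ≤ 2 * ‖g₁‖ ^ 2 + 2 * ‖g₂‖ ^ 2 := by
    nlinarith [norm_nonneg G, sq_nonneg (‖g₁‖ - ‖g₂‖)]
  set D := diam (faceSet p i) ^ (n + 1)
  set κ := (2 / θ0) ^ (n + 1) / volume.real (ball (0 : Euc (n + 1)) 1)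
  calc _ ≤ n ^ n * D * ‖G‖ ^ 2 := inv_diam_mul_setIntegral_sq_faceSet_le p i h0
    _ ≤ n ^ n * D * (2 * ‖g₁‖ ^ 2 + 2 * ‖g₂‖ ^ 2) := by gcongr
    _ = 2 * n ^ n * (D * ‖g₁‖ ^ 2 + D * ‖g₂‖ ^ 2) := by ring
    _ ≤ 2 * n ^ n * (κ * volume.real (cellSet p) * ‖g₁‖ ^ 2 +
          κ * volume.real (cellSet q) * ‖g₂‖ ^ 2) := by gcongr
    _ = _ := by rw [localJumpConst]; ring

variable {g : (Fin (n + 1 + 1) → Euc (n + 1)) → Euc (n + 1)}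
  {b : (Fin (n + 1 + 1) → Euc (n + 1)) → ℝ}

theorem Mesh.Regular.inv_diam_mul_setIntegral_jump_sq_le (hreg : M.Regular θ0) (hθ0 : 0 < θ0)
    (hcr : M.CRContinuous g b) {p q : Fin (n + 1 + 1) → Euc (n + 1)} (hp : p ∈ M.cells)
    (hq : q ∈ M.cells) {i j : Fin (n + 1 + 1)} (hpq : faceSet p i = faceSet q j) :
    1 / diam (faceSet p i) * ∫ x in faceSet p i,
        (affFn (g p) (b p) x - affFn (g q) (b q) x) ^ 2 ∂μH[((n + 1 : ℕ) : ℝ) - 1] ≤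
      localJumpConst n θ0 *
        (volume.real (cellSet p) * ‖g p‖ ^ 2 + volume.real (cellSet q) * ‖g q‖ ^ 2) := by
  have hfin := ne_top_of_le_ne_top ENNReal.ofReal_ne_top (hausdorffMeasure_faceSet_le p i)
  have hint (G : Euc (n + 1)) (B : ℝ) := integrableOn_affFn (isCompact_faceSet p i) hfin G B
  have h0 : ∫ x in faceSet p i, affFn (g p - g q) (b p - b q) x
      ∂μH[((n + 1 : ℕ) : ℝ) - 1] = 0 := by
    simp only [← affFn_sub_affFn]
    rw [integral_sub (hint _ _) (hint _ _), hcr p hp q hq i j hpq, sub_self]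
  simp only [affFn_sub_affFn]
  exact hreg.inv_diam_mul_setIntegral_sq_le hθ0 hp hq hpq h0 (norm_sub_le _ _)

theorem Mesh.Regular.inv_diam_mul_setIntegral_sq_le_of_not_internalFace (hreg : M.Regular θ0)
    (hθ0 : 0 < θ0) (hbdry : M.CRBoundary g b) {p : Fin (n + 1 + 1) → Euc (n + 1)}
    (hp : p ∈ M.cells) {i : Fin (n + 1 + 1)} (hi : ¬ M.InternalFace (faceSet p i)) :
    1 / diam (faceSet p i) * ∫ x in faceSet p i,
        affFn (g p) (b p) x ^ 2 ∂μH[((n + 1 : ℕ) : ℝ) - 1] ≤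
      localJumpConst n θ0 *
        (volume.real (cellSet p) * ‖g p‖ ^ 2 + volume.real (cellSet p) * ‖g p‖ ^ 2) :=
  hreg.inv_diam_mul_setIntegral_sq_le hθ0 hp hp rfl (hbdry p hp i hi)
    (le_add_of_nonneg_left (norm_nonneg _))

end Mesh

/-- Jump estimate for Crouzeix–Raviart functions:
`Σ_σ (1/h_σ) ∫_σ [v]² ≤ c(θ₀) Σ_K ∫_K |∇v|²`. -/
theorem cr_jump_estimate (d : ℕ) (hd : d = 2 ∨ d = 3) (θ0 : ℝ) (hθ0 : 0 < θ0) :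
    ∃ c : ℝ, 0 < c ∧
      ∀ (Ω : Set (Euc d)) (M : Mesh d Ω), M.Regular θ0 →
        ∀ (g : (Fin (d + 1) → Euc d) → Euc d) (b : (Fin (d + 1) → Euc d) → ℝ),
          M.CRContinuous g b → M.CRBoundary g b →
          ∀ J : Set (Euc d) → ℝ,
            (∀ σ ∈ M.faces, M.InternalFace σ →
              ∀ p ∈ M.cells, ∀ q ∈ M.cells, p ≠ q →
                (∃ i, σ = faceSet p i) → (∃ j, σ = faceSet q j) →
                J σ = ∫ x in σ,
                  (affFn (g p) (b p) x - affFn (g q) (b q) x) ^ 2 ∂μH[(d : ℝ) - 1]) →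
            (∀ σ ∈ M.faces, ¬ M.InternalFace σ →
              ∀ p ∈ M.cells, (∃ i, σ = faceSet p i) →
                J σ = ∫ x in σ, (affFn (g p) (b p) x) ^ 2 ∂μH[(d : ℝ) - 1]) →
            ∑ σ ∈ M.faces, (1 / Metric.diam σ) * J σ ≤ c * M.brokenSq g := by
  obtain ⟨n, rfl⟩ : ∃ n, d = n + 1 := ⟨d - 1, by omega⟩
  refine ⟨2 * (n + 1 + 1) * localJumpConst n θ0, by positivity [localJumpConst_pos n hθ0], ?_⟩
  intro Ω M hreg g b hcr hbdry J hJint hJbd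
  set a := fun p => localJumpConst n θ0 * (volume.real (cellSet p) * ‖g p‖ ^ 2)
  have ha : ∀ p ∈ M.cells, 0 ≤ a p := fun p _ =>
    mul_nonneg (localJumpConst_pos n hθ0).le (by positivity)
  have hface : ∀ σ ∈ M.faces, ∃ p ∈ M.cells, ∃ q ∈ M.cells, ∃ i j,
      σ = faceSet p i ∧ σ = faceSet q j ∧ 1 / diam σ * J σ ≤ a p + a q := by
    intro σ hσ
    by_cases hint : M.InternalFace σ
    · obtain ⟨p, hp, q, hq, hpq, ⟨i, rfl⟩, ⟨j, hj⟩⟩ := id hint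
      refine ⟨p, hp, q, hq, i, j, rfl, hj, ?_⟩
      rw [hJint _ hσ hint p hp q hq hpq ⟨i, rfl⟩ ⟨j, hj⟩, ← mul_add]
      exact hreg.inv_diam_mul_setIntegral_jump_sq_le hθ0 hcr hp hq hj
    · obtain ⟨p, hp, i, rfl⟩ := M.mem_faces.1 hσ
      refine ⟨p, hp, p, hp, i, i, rfl, rfl, ?_⟩
      rw [hJbd _ hσ hint p hp ⟨i, rfl⟩, ← mul_add]
      exact hreg.inv_diam_mul_setIntegral_sq_le_of_not_internalFace hθ0 hbdry hp hint
  calc ∑ σ ∈ M.faces, 1 / diam σ * J σ ≤ 2 * (n + 1 + 1) * ∑ p ∈ M.cells, a p :=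
        mod_cast M.sum_faces_le_of_forall_le_add ha hface
    _ = 2 * (n + 1 + 1) * localJumpConst n θ0 * M.brokenSq g := by
        simp only [a, Mesh.brokenSq, Finset.mul_sum, measureReal_def, mul_assoc]
end

section
/- Let T be a regular triangulation of a two-dimensional polygonal domain with regularity parameter θ ≥ θ_0. For each edge σ set d_σ = h_σ·ξ_K/(12·h_K) where K is a chosen cell adjacent to σ. Then for any two points x, y ∈ R^2, Σ_{σ∈E} χ_σ(x,y)·d_σ ≤ c(θ_0)·(|y−x| + h), where χ_σ(x,y) = 1 if the segment [x,y] intersects σ and 0 otherwise, and h = max_K h_K (assuming additionally max_K (h/h_K) bounded). -/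
open MeasureTheory Set

/-!
A crossed edge `σ` with chosen cell `K` has weight `d_σ ≤ ξ_K / 12 ≤ h / 12`, and it is one of
the three edges of `K`, so the sum is at most `h / 4` times the number of chosen cells. These
cells meet `[x, y]` and have diameter at most `h`, so they lie in the union of
`⌈|y - x| / h⌉ + 1` balls of radius `3h` centred on the segment. By regularity and
quasi-uniformity each of them contains a ball of radius `θ₀ h / (2γ)`, and these balls are
disjoint because the cells have disjoint interiors. Comparing areas bounds the number of cells
by `36 (γ / θ₀)² (|y - x| + 2h) / h`.
-/

open Metric Module

section Counting

variable {E : Type*} [NormedAddCommGroup E] [NormedSpace ℝ E]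

theorem card_mul_pow_le_of_pairwiseDisjoint_ball_subset [FiniteDimensional ℝ E] [Nontrivial E]
    {ι κ : Type*} {s : Finset ι} {t : Finset κ} {c : ι → E} {z : κ → E} {r R : ℝ}
    (hr : 0 ≤ r) (hR : 0 ≤ R)
    (hdisj : (s : Set ι).PairwiseDisjoint fun i => ball (c i) r)
    (hsub : ∀ i ∈ s, ball (c i) r ⊆ ⋃ k ∈ t, ball (z k) R) :
    s.card * r ^ finrank ℝ E ≤ t.card * R ^ finrank ℝ E := by
  let _ : MeasurableSpace E := borel E
  have _ : BorelSpace E := ⟨rfl⟩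
  set μ : Measure E := Measure.addHaar
  have hball : ∀ x {ρ : ℝ}, 0 ≤ ρ →
      μ.real (ball x ρ) = ρ ^ finrank ℝ E * μ.real (ball 0 1) := fun x ρ hρ => by
      rw [measureReal_def, Measure.addHaar_ball μ x hρ, ENNReal.toReal_mul,
        ENNReal.toReal_ofReal (by positivity), measureReal_def]
  have hunit : 0 < μ.real (ball (0 : E) 1) :=
    ENNReal.toReal_pos (measure_ball_pos μ 0 one_pos).ne' measure_ball_lt_top.ne
  refine le_of_mul_le_mul_right ?_ hunit
  calc s.card * r ^ finrank ℝ E * μ.real (ball 0 1)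
      = ∑ i ∈ s, μ.real (ball (c i) r) := by simp [hball _ hr, mul_assoc]
    _ = μ.real (⋃ i ∈ s, ball (c i) r) :=
        (measureReal_biUnion_finset hdisj fun _ _ => measurableSet_ball).symm
    _ ≤ μ.real (⋃ k ∈ t, ball (z k) R) :=
        measureReal_mono (Set.iUnion₂_subset hsub)
          ((Bornology.isBounded_biUnion_finset t).2 fun _ _ => isBounded_ball).measure_lt_top.ne
    _ ≤ ∑ k ∈ t, μ.real (ball (z k) R) := measureReal_biUnion_finset_le t _
    _ = t.card * R ^ finrank ℝ E * μ.real (ball 0 1) := by simp [hball _ hR, mul_assoc]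

theorem le_diam_of_ball_subset [Nontrivial E] {s : Set E} (hs : Bornology.IsBounded s) {x : E}
    {r : ℝ} (hr : 0 ≤ r) (hsub : ball x (r / 2) ⊆ s) : r ≤ diam s := by
  have := diam_mono hsub hs
  rwa [diam_ball_eq x (by positivity), mul_div_cancel₀ _ two_ne_zero] at this

theorem exists_dist_lineMap_le_of_mem_segment {x y z : E} {h : ℝ} (hh : 0 < h)
    (hz : z ∈ segment ℝ x y) :
    ∃ k ∈ Finset.range (⌈dist x y / h⌉₊ + 1),
      dist z (AffineMap.lineMap x y (k * h / dist x y : ℝ)) ≤ h := by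
  rw [segment_eq_image_lineMap] at hz
  obtain ⟨t, ⟨ht0, ht1⟩, rfl⟩ := hz
  set L := dist x y
  have hL : 0 ≤ L := dist_nonneg
  set k := ⌊t * L / h⌋₊
  refine ⟨k, ?_, ?_⟩
  · rw [Finset.mem_range, Nat.lt_add_one_iff]
    refine (Nat.floor_le_floor ?_).trans (Nat.floor_le_ceil _)
    gcongr
    nlinarith
  rw [dist_lineMap_lineMap, Real.dist_eq]
  rcases hL.eq_or_lt with hL0 | hLpos
  · simp [show dist x y = 0 from hL0.symm, hh.le]
  have hk : (k : ℝ) * h ≤ t * L := (le_div_iff₀ hh).mp (Nat.floor_le (by positivity))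
  have hk' : t * L < (k + 1) * h := (div_lt_iff₀ hh).mp (Nat.lt_floor_add_one _)
  calc |t - k * h / L| * L = |t * L - k * h| := by
        rw [← abs_of_pos hLpos, ← abs_mul, abs_of_pos hLpos, sub_mul,
          div_mul_cancel₀ _ hLpos.ne']
    _ ≤ h := by rw [abs_of_nonneg (by linarith)]; linarith

end Counting

section Mesh

variable {d : ℕ} {Ω : Set (Euc d)}

theorem faceSet_subset_cellSet (p : Fin (d + 1) → Euc d) (i : Fin (d + 1)) :
    faceSet p i ⊆ cellSet p :=
  convexHull_mono (Set.image_subset_range _ _)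

theorem isBounded_cellSet (p : Fin (d + 1) → Euc d) : Bornology.IsBounded (cellSet p) :=
  ((Set.finite_range p).isCompact_convexHull ℝ).isBounded

theorem diam_mul_div_le_of_eq_faceSet [NeZero d] {σ : Set (Euc d)} {p : Fin (d + 1) → Euc d}
    {i : Fin (d + 1)} (hσ : σ = faceSet p i) {ξ h : ℝ} (hξ : 0 ≤ ξ) {z : Euc d}
    (hz : ball z (ξ / 2) ⊆ cellSet p) (hh : diam (cellSet p) ≤ h) :
    diam σ * ξ / (12 * diam (cellSet p)) ≤ h / 12 := by
  subst hσ
  have hratio : diam (faceSet p i) / diam (cellSet p) ≤ 1 :=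
    div_le_one_of_le₀ (diam_mono (faceSet_subset_cellSet p i) (isBounded_cellSet p)) diam_nonneg
  calc diam (faceSet p i) * ξ / (12 * diam (cellSet p))
      = diam (faceSet p i) / diam (cellSet p) * ξ / 12 := by ring
    _ ≤ ξ / 12 := by gcongr; exact mul_le_of_le_one_left hξ hratio
    _ ≤ h / 12 := by gcongr; exact (le_diam_of_ball_subset (isBounded_cellSet p) hξ hz).trans hh

theorem sum_le_mul_card_image_of_eq_faceSet {F : Finset (Set (Euc d))}
    {P : Set (Euc d) → Fin (d + 1) → Euc d} (hP : ∀ σ ∈ F, ∃ i, σ = faceSet (P σ) i)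
    {D : Set (Euc d) → ℝ} {b : ℝ} (hb : 0 ≤ b) (hD : ∀ σ ∈ F, D σ ≤ b) :
    ∑ σ ∈ F, D σ ≤ (d + 1) * (F.image P).card * b := by
  classical
  have hcard : F.card ≤ (d + 1) * (F.image P).card := by
    refine Finset.card_le_mul_card_image F (d + 1) fun p _ => ?_
    calc (F.filter fun σ => P σ = p).card ≤ (Finset.univ.image (faceSet p)).card := by
          refine Finset.card_le_card fun σ hσ => ?_
          obtain ⟨hσF, rfl⟩ := Finset.mem_filter.mp hσ
          obtain ⟨i, hi⟩ := hP σ hσF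
          exact Finset.mem_image.mpr ⟨i, Finset.mem_univ _, hi.symm⟩
      _ ≤ d + 1 := Finset.card_image_le.trans (by simp)
  calc ∑ σ ∈ F, D σ ≤ F.card * b := by simpa using Finset.sum_le_card_nsmul F D b hD
    _ ≤ ((d + 1) * (F.image P).card : ℕ) * b := by gcongr
    _ = (d + 1) * (F.image P).card * b := by push_cast; ring

theorem Mesh.pairwiseDisjoint_of_subset_cellSet (M : Mesh d Ω)
    {T : Finset (Fin (d + 1) → Euc d)} (hT : T ⊆ M.cells)
    {U : (Fin (d + 1) → Euc d) → Set (Euc d)} (hU : ∀ p ∈ T, IsOpen (U p))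
    (hUp : ∀ p ∈ T, U p ⊆ cellSet p) : (T : Set (Fin (d + 1) → Euc d)).PairwiseDisjoint U := by
  intro p hp q hq hpq
  have hint := M.disjoint_interiors p (hT hp) q (hT hq) hpq
  exact Set.disjoint_iff_inter_eq_empty.mpr <| Set.subset_empty_iff.mp <| hint ▸
    Set.inter_subset_inter ((hU p hp).subset_interior_iff.mpr (hUp p hp))
      ((hU q hq).subset_interior_iff.mpr (hUp q hq))

theorem Mesh.card_mul_pow_le_of_meets_segment [NeZero d] (M : Mesh d Ω)
    {T : Finset (Fin (d + 1) → Euc d)} (hT : T ⊆ M.cells) {x y : Euc d} {r h : ℝ}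
    (hr : 0 ≤ r) (hh : 0 < h) (hball : ∀ p ∈ T, ∃ c, ball c r ⊆ cellSet p)
    (hdiam : ∀ p ∈ T, diam (cellSet p) ≤ h)
    (hmeet : ∀ p ∈ T, (segment ℝ x y ∩ cellSet p).Nonempty) :
    T.card * r ^ d * h ≤ (dist x y + 2 * h) * (3 * h) ^ d := by
  choose! c hc using hball
  have hcount := card_mul_pow_le_of_pairwiseDisjoint_ball_subset (t := Finset.range _)
    (z := fun k : ℕ => AffineMap.lineMap x y (k * h / dist x y : ℝ)) hr
    (by positivity : 0 ≤ 3 * h)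
    (M.pairwiseDisjoint_of_subset_cellSet hT (fun _ _ => isOpen_ball) hc) fun p hp w hw => by
      obtain ⟨z, hzseg, hzp⟩ := hmeet p hp
      obtain ⟨k, hk, hzk⟩ := exists_dist_lineMap_le_of_mem_segment hh hzseg
      have hwz : dist w z ≤ h :=
        (dist_le_diam_of_mem (isBounded_cellSet p) (hc p hp hw) hzp).trans (hdiam p hp)
      have := dist_triangle w z (AffineMap.lineMap x y (k * h / dist x y : ℝ))
      exact Set.mem_biUnion hk <| mem_ball.mpr <| by linarith
  simp only [finrank_euclideanSpace_fin, Finset.card_range, Nat.cast_add, Nat.cast_one] at hcount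
  have hceil : (⌈dist x y / h⌉₊ + 1 : ℝ) * h ≤ dist x y + 2 * h := by
    have := Nat.ceil_lt_add_one (div_nonneg dist_nonneg hh.le : 0 ≤ dist x y / h)
    calc (⌈dist x y / h⌉₊ + 1 : ℝ) * h ≤ (dist x y / h + 2) * h := by
          gcongr ?_ * h; linarith
      _ = dist x y + 2 * h := by field_simp
  calc T.card * r ^ d * h ≤ (⌈dist x y / h⌉₊ + 1 : ℝ) * (3 * h) ^ d * h := by gcongr
    _ ≤ (dist x y + 2 * h) * (3 * h) ^ d := by nlinarith [pow_pos (by positivity : 0 < 3 * h) d]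

theorem Mesh.Regular.card_mul_le_of_meets_segment [NeZero d] {M : Mesh d Ω} {θ0 γ h : ℝ}
    (hreg : M.Regular θ0) (hθ0 : 0 ≤ θ0) (hγ : 0 < γ) {T : Finset (Fin (d + 1) → Euc d)}
    (hT : T ⊆ M.cells) {x y : Euc d} (hh : 0 < h) (hdiam : ∀ p ∈ T, diam (cellSet p) ≤ h)
    (hquasi : ∀ p ∈ T, h ≤ γ * diam (cellSet p))
    (hmeet : ∀ p ∈ T, (segment ℝ x y ∩ cellSet p).Nonempty) :
    T.card * (θ0 / (2 * γ)) ^ d * h ≤ 3 ^ d * (dist x y + 2 * h) := by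
  have hball : ∀ p ∈ T, ∃ c, ball c (θ0 / (2 * γ) * h) ⊆ cellSet p := fun p hp => by
    obtain ⟨c, hc⟩ := hreg.1 p (hT hp)
    refine ⟨c, (ball_subset_ball ?_).trans hc⟩
    rw [div_mul_eq_mul_div, div_le_div_iff₀ (by positivity) (by norm_num)]
    nlinarith [hquasi p hp]
  have hcount := M.card_mul_pow_le_of_meets_segment hT (by positivity) hh hball hdiam hmeet
  refine le_of_mul_le_mul_right ?_ (pow_pos hh d)
  calc T.card * (θ0 / (2 * γ)) ^ d * h * h ^ d = T.card * (θ0 / (2 * γ) * h) ^ d * h := by ring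
    _ ≤ (dist x y + 2 * h) * (3 * h) ^ d := hcount
    _ = 3 ^ d * (dist x y + 2 * h) * h ^ d := by ring

end Mesh

open scoped Classical in
/-- Covering lemma: for a regular quasi-uniform 2D triangulation, with
`d_σ = h_σ ξ_K/(12 h_K)` for a chosen cell `K` adjacent to `σ`, and any two points
`x, y ∈ ℝ²`, `Σ_σ χ_σ(x,y) d_σ ≤ c(θ₀,γ) (|y − x| + h)`. -/
theorem edge_covering_lemma (θ0 γ : ℝ) (hθ0 : 0 < θ0) (hγ : 0 < γ) :
    ∃ c : ℝ, 0 < c ∧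
      ∀ (Ω : Set (Euc 2)) (M : Mesh 2 Ω), M.Regular θ0 →
        ∀ h : ℝ, 0 ≤ h → (∀ p ∈ M.cells, Metric.diam (cellSet p) ≤ h) →
          (∀ p ∈ M.cells, h ≤ γ * Metric.diam (cellSet p)) →
        ∀ ξ : (Fin 3 → Euc 2) → ℝ,
          (∀ p ∈ M.cells, 0 < ξ p ∧
            ∃ x : Euc 2, Metric.ball x (ξ p / 2) ⊆ cellSet p) →
        ∀ D : Set (Euc 2) → ℝ,
          (∀ σ ∈ M.faces, ∃ p ∈ M.cells, (∃ i, σ = faceSet p i) ∧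
            D σ = Metric.diam σ * ξ p / (12 * Metric.diam (cellSet p))) →
        ∀ x y : Euc 2,
          ∑ σ ∈ M.faces, (if (segment ℝ x y ∩ σ).Nonempty then D σ else 0) ≤
            c * (dist x y + h) := by
  refine ⟨18 * γ ^ 2 / θ0 ^ 2, by positivity, ?_⟩
  intro Ω M hreg h hh hdiam hquasi ξ hξ D hD x y
  choose! P hPcell hPface hPD using hD
  set F := M.faces.filter fun σ => (segment ℝ x y ∩ σ).Nonempty
  have hFfaces : ∀ σ ∈ F, σ ∈ M.faces := fun σ hσ => (Finset.mem_filter.mp hσ).1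
  have hcells : F.image P ⊆ M.cells :=
    Finset.forall_mem_image.2 fun σ hσ => hPcell σ (hFfaces σ hσ)
  have hsum : ∑ σ ∈ M.faces, (if (segment ℝ x y ∩ σ).Nonempty then D σ else 0) ≤
      (F.image P).card * h / 4 := by
    rw [← Finset.sum_filter]
    refine (sum_le_mul_card_image_of_eq_faceSet (fun σ hσ => hPface σ (hFfaces σ hσ))
      (by positivity : 0 ≤ h / 12) fun σ hσ => ?_).trans_eq (by push_cast; ring)
    have hσ := hFfaces σ hσ
    obtain ⟨hξ0, z, hz⟩ := hξ _ (hPcell σ hσ)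
    rw [hPD σ hσ]
    exact diam_mul_div_le_of_eq_faceSet (hPface σ hσ).choose_spec hξ0.le hz
      (hdiam _ (hPcell σ hσ))
  rcases hh.eq_or_lt with rfl | hpos
  · exact hsum.trans (by simp only [mul_zero, zero_div]; positivity)
  have hcount := hreg.card_mul_le_of_meets_segment hθ0.le hγ hcells (x := x) (y := y) hpos
    (fun p hp => hdiam p (hcells hp)) (fun p hp => hquasi p (hcells hp)) <|
    Finset.forall_mem_image.2 fun σ hσ => (Finset.mem_filter.mp hσ).2.mono <|
      Set.inter_subset_inter_right _ <|
        (hPface σ (hFfaces σ hσ)).choose_spec.subset.trans (faceSet_subset_cellSet _ _)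
  rw [show (F.image P).card * (θ0 / (2 * γ)) ^ 2 * h =
    (F.image P).card * h * θ0 ^ 2 / (4 * γ ^ 2) by ring, div_le_iff₀ (by positivity)] at hcount
  refine hsum.trans ?_
  rw [div_mul_eq_mul_div, le_div_iff₀ (by positivity)]
  nlinarith [mul_nonneg (sq_nonneg γ) (dist_nonneg : 0 ≤ dist x y), sq_nonneg γ]
end

section
/- Let K be a triangle with a horizontal edge σ = (0, h_σ) × {0}, diameter h_K, and inscribed-ball diameter ξ_K, and let z = (z_1, z_2) be the vertex opposite to σ. Then z_2 ≥ ξ_K, and consequently the rectangle (h_σ/3, 2h_σ/3) × (0, h_σ·ξ_K/(12·h_K)) is contained in K. -/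
/-!
The triangle lies in the slab `0 ≤ p₂ ≤ z₂`, so a ball of diameter `ξ` inside it forces
`ξ ≤ z₂`. For `w` in the rectangle, the barycentric coordinate of `z` is
`c = w₂ / z₂ < h_σ / (12 h_K)`, and `h_σ, |z₁| ≤ h_K`; hence `c < 1/12` and
`|c z₁| < h_σ / 12`, which keeps the coordinate `b = (w₁ - c z₁) / h_σ` of `B` in
`(1/4, 3/4)` and the coordinate `1 - b - c` of `A` positive.
-/

open Metric Set

lemma two_mul_le_of_ball_subset_slab {ι : Type*} [Fintype ι] [DecidableEq ι]
    {x : EuclideanSpace ℝ ι} {r a b : ℝ} (i : ι) (hab : a ≤ b)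
    (h : ball x r ⊆ {p | p i ∈ Icc a b}) : 2 * r ≤ b - a := by
  by_contra! hlt
  have shift_mem : ∀ t : ℝ, |t| < r → x i + t ∈ Icc a b := fun t ht => by
    simpa using h (show x + EuclideanSpace.single i t ∈ ball x r by simpa [PiLp.norm_single])
  set s := (b - a + 2 * r) / 4 with hs_def
  have hs : |s| < r := by rw [abs_lt]; constructor <;> linarith
  have hup := (shift_mem s hs).2
  have hlow := (shift_mem (-s) (by rwa [abs_neg])).1
  linarith

lemma convex_coord_preimage_Icc {ι : Type*} (i : ι) (a b : ℝ) :
    Convex ℝ {p : EuclideanSpace ℝ ι | p i ∈ Icc a b} :=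
  (convex_Icc a b).linear_preimage
    ((LinearMap.proj i).comp (WithLp.linearEquiv 2 ℝ (ι → ℝ)).toLinearMap)

lemma abs_apply_sub_le_diam {ι : Type*} [Fintype ι] {s : Set (EuclideanSpace ℝ ι)}
    (hs : Bornology.IsBounded s) {p q : EuclideanSpace ℝ ι} (hp : p ∈ s) (hq : q ∈ s)
    (i : ι) : |p i - q i| ≤ diam s :=
  (Real.dist_eq (p i) (q i) ▸ PiLp.dist_apply_le p q i).trans (dist_le_diam_of_mem hs hp hq)

lemma smul_add_smul_add_smul_mem_convexHull {E : Type*} [AddCommGroup E] [Module ℝ E]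
    {A B C : E} {a b c : ℝ} (ha : 0 ≤ a) (hb : 0 ≤ b) (hc : 0 ≤ c) (habc : a + b + c = 1) :
    a • A + b • B + c • C ∈ convexHull ℝ {A, B, C} := by
  have := (convex_convexHull ℝ ({A, B, C} : Set E)).sum_mem (t := Finset.univ)
    (w := ![a, b, c]) (z := ![A, B, C]) (fun i _ => by fin_cases i <;> assumption)
    (by simp [Fin.sum_univ_three, habc])
    (fun i _ => subset_convexHull ℝ _ (by fin_cases i <;> simp))
  simpa [Fin.sum_univ_three] using this

lemma mem_convexHull_of_barycentric {A B z w : EuclideanSpace ℝ (Fin 2)} {hσ : ℝ}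
    (hA0 : A 0 = 0) (hA1 : A 1 = 0) (hB0 : B 0 = hσ) (hB1 : B 1 = 0)
    (hhσ : 0 < hσ) (hz : 0 < z 1) (hw1 : 0 ≤ w 1) (hlo : w 1 / z 1 * z 0 ≤ w 0)
    (hhi : w 0 - w 1 / z 1 * z 0 ≤ hσ * (1 - w 1 / z 1)) :
    w ∈ convexHull ℝ {A, B, z} := by
  set c := w 1 / z 1
  set b := (w 0 - c * z 0) / hσ
  have hw : w = (1 - b - c) • A + b • B + c • z := by
    ext i
    fin_cases i
    · simp [hA0, hB0, b]; field_simp; ring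
    · simp [hA1, hB1, c]; field_simp
  rw [hw]
  refine smul_add_smul_add_smul_mem_convexHull ?_ ?_ (div_nonneg hw1 hz.le) (by ring)
  · have : b ≤ 1 - c := by rw [div_le_iff₀ hhσ]; linarith
    linarith
  · exact div_nonneg (by linarith) hhσ.le

theorem triangle_rectangle_inclusion_general
    (A B z : EuclideanSpace ℝ (Fin 2)) (hσ ξ : ℝ)
    (hA0 : A 0 = 0) (hA1 : A 1 = 0) (hB0 : B 0 = hσ) (hB1 : B 1 = 0)
    (hz : 0 < z 1)
    (hball : ∃ x : EuclideanSpace ℝ (Fin 2),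
      Metric.ball x (ξ / 2) ⊆ convexHull ℝ ({A, B, z} : Set (EuclideanSpace ℝ (Fin 2)))) :
    ξ ≤ z 1 ∧
      ∀ w : EuclideanSpace ℝ (Fin 2),
        w 0 ∈ Set.Ioo (hσ / 3) (2 * hσ / 3) →
        w 1 ∈ Set.Ioo 0 (hσ * ξ /
          (12 * Metric.diam (convexHull ℝ ({A, B, z} : Set (EuclideanSpace ℝ (Fin 2)))))) →
        w ∈ convexHull ℝ ({A, B, z} : Set (EuclideanSpace ℝ (Fin 2))) := by
  set K := convexHull ℝ ({A, B, z} : Set (EuclideanSpace ℝ (Fin 2)))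
  obtain ⟨x, hx⟩ := hball
  have hK_slab : K ⊆ {p | p 1 ∈ Icc 0 (z 1)} :=
    convexHull_min (by rintro p (rfl | rfl | rfl) <;> simp [hA1, hB1, hz.le])
      (convex_coord_preimage_Icc 1 0 (z 1))
  have hξz : ξ ≤ z 1 := by
    linarith [two_mul_le_of_ball_subset_slab 1 hz.le (hx.trans hK_slab)]
  refine ⟨hξz, fun w ⟨hw0_lo, hw0_hi⟩ ⟨hw1_pos, hw1_lt⟩ => ?_⟩
  have hhσ : 0 < hσ := by linarith
  have hK_bdd : Bornology.IsBounded K := ((toFinite _).isCompact_convexHull ℝ).isBounded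
  have vertex_mem : ∀ p ∈ ({A, B, z} : Set _), p ∈ K := fun p hp => subset_convexHull ℝ _ hp
  have hσ_le : hσ ≤ diam K := by
    simpa [hA0, hB0, abs_of_pos hhσ] using
      abs_apply_sub_le_diam hK_bdd (vertex_mem B (by simp)) (vertex_mem A (by simp)) 0
  have hz0_le : |z 0| ≤ diam K := by
    simpa [hA0] using
      abs_apply_sub_le_diam hK_bdd (vertex_mem z (by simp)) (vertex_mem A (by simp)) 0
  set c := w 1 / z 1
  have hc_pos : 0 < c := div_pos hw1_pos hz
  have hcd : c * diam K < hσ / 12 := by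
    rw [lt_div_iff₀ (by linarith)] at hw1_lt
    rw [div_mul_eq_mul_div, div_lt_iff₀ hz]
    linarith [mul_le_mul_of_nonneg_left hξz hhσ.le]
  have hcz : |c * z 0| < hσ / 12 := by
    rw [abs_mul, abs_of_pos hc_pos]
    exact (mul_le_mul_of_nonneg_left hz0_le hc_pos.le).trans_lt hcd
  have hσc : hσ * c < hσ / 12 := by linarith [mul_le_mul_of_nonneg_left hσ_le hc_pos.le]
  apply mem_convexHull_of_barycentric hA0 hA1 hB0 hB1 hhσ hz hw1_pos.le <;>
    linarith [abs_le.mp hcz.le]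

/-- For a triangle `K` with horizontal edge `σ` from `(0,0)` to `(h_σ,0)`, opposite vertex
`z` in the upper half-plane, diameter `h_K` and containing a ball of diameter `ξ`, one has
`z₂ ≥ ξ` and the rectangle `(h_σ/3, 2h_σ/3) × (0, h_σ ξ /(12 h_K))` is contained in `K`. -/
theorem triangle_rectangle_inclusion
    (A B z : EuclideanSpace ℝ (Fin 2)) (hσ ξ : ℝ)
    (hA0 : A 0 = 0) (hA1 : A 1 = 0) (hB0 : B 0 = hσ) (hB1 : B 1 = 0)
    (hhσ : 0 < hσ) (hz : 0 < z 1) (hξ : 0 < ξ)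
    (hball : ∃ x : EuclideanSpace ℝ (Fin 2),
      Metric.ball x (ξ / 2) ⊆ convexHull ℝ ({A, B, z} : Set (EuclideanSpace ℝ (Fin 2)))) :
    ξ ≤ z 1 ∧
      ∀ w : EuclideanSpace ℝ (Fin 2),
        w 0 ∈ Set.Ioo (hσ / 3) (2 * hσ / 3) →
        w 1 ∈ Set.Ioo 0 (hσ * ξ /
          (12 * Metric.diam (convexHull ℝ ({A, B, z} : Set (EuclideanSpace ℝ (Fin 2)))))) →
        w ∈ convexHull ℝ ({A, B, z} : Set (EuclideanSpace ℝ (Fin 2))) :=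
  triangle_rectangle_inclusion_general A B z hσ ξ hA0 hA1 hB0 hB1 hz hball
end

section
/- Let f : (0,∞) → R be increasing and continuously differentiable, and suppose that for all 0 < a < b, the quantity (b − a)/(f(b) − f(a)) lies in [a, b]. Then f'(x) = 1/x for all x > 0, i.e., f = log + constant. -/
/-!
The hypothesis says that every chord slope of `f` on `(0, ∞)` is the reciprocal of a point of
`[a, b]`, hence lies in `[1/b, 1/a]`. Letting `b ↓ a` squeezes the right derivative at `a`
between `1/b → 1/a` and `1/a`, so `f' = 1/x`, and `f - log` is constant on the connected set
`(0, ∞)`.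
-/

open Set Filter Topology

lemma inv_mem_Icc_inv {a b x : ℝ} (ha : 0 < a) (hx : x ∈ Icc a b) : x⁻¹ ∈ Icc b⁻¹ a⁻¹ :=
  ⟨inv_anti₀ (ha.trans_le hx.1) hx.2, inv_anti₀ ha hx.1⟩

lemma slope_mem_Icc_inv_of_div_mem_Icc {f : ℝ → ℝ} {a b : ℝ} (ha : 0 < a)
    (h : (b - a) / (f b - f a) ∈ Icc a b) : slope f a b ∈ Icc b⁻¹ a⁻¹ := by
  rw [slope_def_field, ← inv_div]
  exact inv_mem_Icc_inv ha h

lemma HasDerivWithinAt.eq_inv_of_slope_mem_Icc_inv {f : ℝ → ℝ} {f' a : ℝ} (ha : 0 < a)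
    (hf : HasDerivWithinAt f f' (Ioi a) a)
    (hslope : ∀ b, a < b → slope f a b ∈ Icc b⁻¹ a⁻¹) : f' = a⁻¹ := by
  have hf' : Tendsto (slope f a) (𝓝[>] a) (𝓝 f') :=
    (hasDerivWithinAt_iff_tendsto_slope' (lt_irrefl a)).1 hf
  have hbounds : ∀ᶠ b in 𝓝[>] a, slope f a b ∈ Icc b⁻¹ a⁻¹ :=
    eventually_mem_nhdsWithin.mono hslope
  have hinv : Tendsto (·⁻¹) (𝓝[>] a) (𝓝 a⁻¹) :=
    (tendsto_inv₀ ha.ne').mono_left nhdsWithin_le_nhds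
  exact le_antisymm (le_of_tendsto hf' (hbounds.mono fun _ hb => hb.2))
    (le_of_tendsto_of_tendsto hinv hf' (hbounds.mono fun _ hb => hb.1))

lemma exists_eq_log_add_of_hasDerivAt_inv {f : ℝ → ℝ}
    (hf : ∀ x ∈ Ioi (0 : ℝ), HasDerivAt f x⁻¹ x) :
    ∃ c : ℝ, ∀ x : ℝ, 0 < x → f x = Real.log x + c :=
  isOpen_Ioi.exists_eq_add_of_deriv_eq isPreconnected_Ioi
    (fun x hx => (hf x hx).differentiableAt.differentiableWithinAt)
    (Real.differentiableOn_log.mono fun _ hx => ne_of_gt hx)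
    (fun x hx => by rw [(hf x hx).deriv, Real.deriv_log])

theorem log_characterization_general (f f' : ℝ → ℝ)
    (hderiv : ∀ x ∈ Set.Ioi (0:ℝ), HasDerivAt f (f' x) x)
    (hmean : ∀ a b : ℝ, 0 < a → a < b →
      (b - a) / (f b - f a) ∈ Set.Icc a b) :
    (∀ x : ℝ, 0 < x → f' x = 1 / x) ∧
      ∃ c : ℝ, ∀ x : ℝ, 0 < x → f x = Real.log x + c := by
  have hf' : ∀ x ∈ Ioi (0 : ℝ), f' x = x⁻¹ := fun x hx =>
    (hderiv x hx).hasDerivWithinAt.eq_inv_of_slope_mem_Icc_inv hx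
      fun b hxb => slope_mem_Icc_inv_of_div_mem_Icc hx (hmean x b hx hxb)
  refine ⟨fun x hx => by rw [hf' x hx, one_div], ?_⟩
  exact exists_eq_log_add_of_hasDerivAt_inv fun x hx => hf' x hx ▸ hderiv x hx

theorem log_characterization (f f' : ℝ → ℝ)
    (hmono : StrictMonoOn f (Set.Ioi 0))
    (hderiv : ∀ x ∈ Set.Ioi (0:ℝ), HasDerivAt f (f' x) x)
    (hcont : ContinuousOn f' (Set.Ioi 0))
    (hmean : ∀ a b : ℝ, 0 < a → a < b →
      (b - a) / (f b - f a) ∈ Set.Icc a b) :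
    (∀ x : ℝ, 0 < x → f' x = 1 / x) ∧
      ∃ c : ℝ, ∀ x : ℝ, 0 < x → f x = Real.log x + c :=
  log_characterization_general f f' hderiv hmean
end

section
/- Let T be a finite-volume mesh, and for each internal face σ = K|L let v_{σ,K} ∈ R be the signed flux from K to L (with v_{σ,L} = −v_{σ,K}), let ρ_K > 0 for each cell K, and let ρ_σ denote the upwind value: ρ_σ = ρ_K if v_{σ,K} ≥ 0, ρ_σ = ρ_L otherwise. For each face define the logarithmic mean ρ̄_σ by ρ̄_σ·log ρ_K − ρ_K = ρ̄_σ·log ρ_L − ρ_L (and ρ̄_σ = ρ_K when ρ_K = ρ_L). Then Σ over internal faces σ = K|L of v_{σ,K}·(ρ_σ − ρ̄_σ)·(log ρ_K − log ρ_L) ≥ 0, where the face orientation is chosen so that v_{σ,K} ≥ 0. -/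
/-- Sign property of the upwinded mass flux tested against `log ρ`.
Each internal face `σ = K|L` is oriented so that the flux `v σ = v_{σ,K} ≥ 0`;
hence the upwind value is `ρσ = ρK σ`.  The logarithmic mean `ρbar σ` is
defined by `ρbar σ * log ρK - ρK = ρbar σ * log ρL - ρL` (and `ρbar σ = ρK σ`
when `ρK σ = ρL σ`). -/
theorem upwind_sign_property {ι : Type*} (F : Finset ι)
    (v ρK ρL ρbar : ι → ℝ)
    (hv : ∀ σ ∈ F, 0 ≤ v σ)
    (hρK : ∀ σ ∈ F, 0 < ρK σ) (hρL : ∀ σ ∈ F, 0 < ρL σ)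
    (hbar_eq : ∀ σ ∈ F, ρK σ = ρL σ → ρbar σ = ρK σ)
    (hbar_ne : ∀ σ ∈ F, ρK σ ≠ ρL σ →
      ρbar σ * Real.log (ρK σ) - ρK σ = ρbar σ * Real.log (ρL σ) - ρL σ) :
    0 ≤ ∑ σ ∈ F, v σ * (ρK σ - ρbar σ) * (Real.log (ρK σ) - Real.log (ρL σ)) := by
  apply Finset.sum_nonneg
  intro σ hσ
  rcases eq_or_ne (ρK σ) (ρL σ) with h | h
  · simp [h]
  · have hK := hρK σ hσ
    have hL := hρL σ hσ
    have hbar := hbar_ne σ hσ h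
    -- ρbar σ * (log ρK - log ρL) = ρK - ρL
    have h1 : ρbar σ * (Real.log (ρK σ) - Real.log (ρL σ)) = ρK σ - ρL σ := by
      ring_nf
      ring_nf at hbar
      linarith
    -- log(ρL/ρK) ≤ ρL/ρK - 1
    have h2 : Real.log (ρL σ / ρK σ) ≤ ρL σ / ρK σ - 1 :=
      Real.log_le_sub_one_of_pos (div_pos hL hK)
    rw [Real.log_div (ne_of_gt hL) (ne_of_gt hK)] at h2
    have h3 : ρK σ * (Real.log (ρK σ) - Real.log (ρL σ)) ≥ ρK σ - ρL σ := by
      have := mul_le_mul_of_nonneg_left h2 hK.le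
      have hd : ρK σ * (ρL σ / ρK σ - 1) = ρL σ - ρK σ := by
        field_simp
      nlinarith
    have hterm : 0 ≤ (ρK σ - ρbar σ) * (Real.log (ρK σ) - Real.log (ρL σ)) := by
      nlinarith [h1, h3]
    have := mul_nonneg (hv σ hσ) hterm
    linarith [this, mul_assoc (v σ) (ρK σ - ρbar σ) (Real.log (ρK σ) - Real.log (ρL σ))]
end
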